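/- arXiv:2203.17050 — 4 statements merged into one kernel-verified Lean document; each statement's English description precedes it below -/
import Mathlib

section
/- Let E : [0,∞) → [0,∞) be non-increasing and suppose there exists T > 0 such that ∫_t^∞ E(s) ds ≤ T·E(t) for all t ≥ 0. Then E(t) ≤ E(0)·e^{1 - t/T} for all t ≥ T. -/
/-!
Write `F t = ∫_t^∞ E`. Since `E` is non-increasing, `F t ≥ F (t + s) + s E(t + s)`, and the
hypothesis `F ≤ T E` turns this into `F (t + s) (1 + s/T) ≤ F t`. Iterating `n` times with step
`t/n` and letting `n → ∞` gives `F t ≤ F 0 e^{-t/T}`. Finally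
`T E(t) ≤ F (t - T) ≤ F 0 e^{1 - t/T} ≤ T E(0) e^{1 - t/T}` for `t ≥ T`.
-/

open MeasureTheory Set Real Filter Topology

theorem mul_le_intervalIntegral_of_antitoneOn {E : ℝ → ℝ} {a b : ℝ} (hab : a ≤ b)
    (hE : AntitoneOn E (Icc a b)) : (b - a) * E b ≤ ∫ x in a..b, E x := by
  calc (b - a) * E b = ∫ _ in a..b, E b := by simp
    _ ≤ ∫ x in a..b, E x :=
      intervalIntegral.integral_mono_on hab intervalIntegrable_const
        (uIcc_of_le hab ▸ hE).intervalIntegrable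
        fun x hx => hE hx (right_mem_Icc.2 hab) hx.2

theorem setIntegral_Ioi_add_mul_le_of_antitoneOn {E : ℝ → ℝ} {a b : ℝ} (hab : a ≤ b)
    (hint : IntegrableOn E (Ioi a)) (hE : AntitoneOn E (Icc a b)) :
    (∫ x in Ioi b, E x) + (b - a) * E b ≤ ∫ x in Ioi a, E x := by
  rw [← intervalIntegral.integral_interval_add_Ioi hint (hint.mono_set (Ioi_subset_Ioi hab))]
  linarith [mul_le_intervalIntegral_of_antitoneOn hab hE]

theorem setIntegral_Ioi_mul_one_add_div_le {E : ℝ → ℝ} {T : ℝ} (hT : 0 < T)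
    (hE : AntitoneOn E (Ici 0)) (hint : ∀ t ≥ 0, IntegrableOn E (Ioi t))
    (h : ∀ t ≥ 0, (∫ s in Ioi t, E s) ≤ T * E t) {t s : ℝ} (ht : 0 ≤ t) (hs : 0 ≤ s) :
    (∫ x in Ioi (t + s), E x) * (1 + s / T) ≤ ∫ x in Ioi t, E x := by
  have hstep := setIntegral_Ioi_add_mul_le_of_antitoneOn (le_add_of_nonneg_right hs) (hint t ht)
    (hE.mono fun x hx => ht.trans hx.1)
  have hbound : (∫ x in Ioi (t + s), E x) / T * s ≤ E (t + s) * s :=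
    mul_le_mul_of_nonneg_right ((div_le_iff₀' hT).2 (h _ (by linarith))) hs
  rw [add_sub_cancel_left] at hstep
  calc (∫ x in Ioi (t + s), E x) * (1 + s / T)
      = (∫ x in Ioi (t + s), E x) + (∫ x in Ioi (t + s), E x) / T * s := by ring
    _ ≤ ∫ x in Ioi t, E x := by linarith

section Decay

variable {F : ℝ → ℝ} {T : ℝ}

theorem mul_one_add_div_pow_le (hT : 0 ≤ T)
    (hF : ∀ t s, 0 ≤ t → 0 ≤ s → F (t + s) * (1 + s / T) ≤ F t) {s : ℝ} (hs : 0 ≤ s)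
    (n : ℕ) :
    F (n * s) * (1 + s / T) ^ n ≤ F 0 := by
  induction n with
  | zero => simp
  | succ n ih =>
    calc F ((n + 1 : ℕ) * s) * (1 + s / T) ^ (n + 1)
        = F (n * s + s) * (1 + s / T) * (1 + s / T) ^ n := by push_cast; ring_nf
      _ ≤ F (n * s) * (1 + s / T) ^ n := by
        gcongr
        exact hF _ _ (by positivity) hs
      _ ≤ F 0 := ih

theorem le_mul_exp_neg_div_of_mul_one_add_div_le (hT : 0 ≤ T)
    (hF : ∀ t s, 0 ≤ t → 0 ≤ s → F (t + s) * (1 + s / T) ≤ F t) {t : ℝ}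
    (ht : 0 ≤ t) :
    F t ≤ F 0 * exp (-(t / T)) := by
  have hlim : Tendsto (fun n : ℕ => F t * (1 + t / T / n) ^ n) atTop (𝓝 (F t * exp (t / T))) :=
    (tendsto_one_add_div_pow_exp _).const_mul _
  have hbound : F t * exp (t / T) ≤ F 0 := by
    refine le_of_tendsto hlim ((eventually_ne_atTop 0).mono fun n hn => ?_)
    have hiter := mul_one_add_div_pow_le hT hF (div_nonneg ht n.cast_nonneg) n
    rwa [mul_div_cancel₀ _ (Nat.cast_ne_zero.2 hn), div_right_comm] at hiter
  rwa [exp_neg, ← div_eq_mul_inv, le_div_iff₀ (exp_pos _)]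

end Decay

theorem komornik_thm_8_1 (E : ℝ → ℝ)
    (hE_nonneg : ∀ t ≥ 0, 0 ≤ E t)
    (hE_mono : ∀ s t : ℝ, 0 ≤ s → s ≤ t → E t ≤ E s)
    (hE_int : ∀ t ≥ 0, MeasureTheory.IntegrableOn E (Set.Ioi t))
    (T : ℝ) (hT : 0 < T)
    (h : ∀ t ≥ 0, (∫ s in Set.Ioi t, E s) ≤ T * E t) :
    ∀ t ≥ T, E t ≤ E 0 * Real.exp (1 - t / T) := by
  intro t ht
  have hanti : AntitoneOn E (Ici 0) := fun s hs u _ hsu => hE_mono s u hs hsu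
  have htT : 0 ≤ t - T := by linarith
  have hdecay := le_mul_exp_neg_div_of_mul_one_add_div_le (F := fun t => ∫ x in Ioi t, E x) hT.le
    (fun t s ht hs => setIntegral_Ioi_mul_one_add_div_le hT hanti hE_int h ht hs) htT
  have hlast := setIntegral_Ioi_add_mul_le_of_antitoneOn (sub_le_self t hT.le) (hE_int _ htT)
    (hanti.mono fun x hx => htT.trans hx.1)
  have htail_nonneg : 0 ≤ ∫ x in Ioi t, E x :=
    setIntegral_nonneg measurableSet_Ioi fun x hx => hE_nonneg x (by linarith [mem_Ioi.1 hx])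
  refine le_of_mul_le_mul_left ?_ hT
  calc T * E t ≤ ∫ x in Ioi (t - T), E x := by rw [sub_sub_cancel] at hlast; linarith
    _ ≤ (∫ x in Ioi 0, E x) * exp (-((t - T) / T)) := hdecay
    _ ≤ T * E 0 * exp (1 - t / T) := by
      rw [show -((t - T) / T) = 1 - t / T by field_simp; ring]
      gcongr
      exact h 0 le_rfl
    _ = T * (E 0 * exp (1 - t / T)) := by ring
end

section
/- Let E : [0,∞) → [0,∞) be non-increasing and suppose there exist T > 0 such that ∫_t^∞ E(s) ds ≤ T·E(t) for all t ≥ 0. Then E(t) ≤ E(0)·e^{1 - t/T} for all t ≥ 0 (not just t ≥ T). -/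
open MeasureTheory Set Real Filter

/-! With `F t = ∫_t^∞ E`, monotonicity gives `F s - F t ≥ (t - s) E t ≥ (t - s) F t / T`,
i.e. `F t (1 + (t - s)/T) ≤ F s`. Chaining this along `n` equal steps of `[0, t]` and letting
`n → ∞` yields `F t e^{t/T} ≤ F 0 ≤ T E 0`. For `t ≥ T`, the interval `[t - T, t]` gives
`T E t ≤ F (t - T) ≤ T E 0 e^{1 - t/T}`; for `t ≤ T` the bound is just `E t ≤ E 0`. -/

section DiscreteGronwall

variable {F : ℝ → ℝ} {a c : ℝ}

lemma mul_one_add_pow_le_of_mul_one_add_le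
    (hF : ∀ s t, a ≤ s → s ≤ t → F t * (1 + c * (t - s)) ≤ F s) (hc : 0 ≤ c)
    {δ : ℝ} (hδ : 0 ≤ δ) : ∀ n : ℕ, F (a + n * δ) * (1 + c * δ) ^ n ≤ F a
  | 0 => by simp
  | n + 1 => by
    have hstep := hF (a + n * δ) (a + (n + 1 : ℕ) * δ)
      (le_add_of_nonneg_right (by positivity)) (by push_cast; linarith)
    have hδ' : a + (n + 1 : ℕ) * δ - (a + n * δ) = δ := by push_cast; ring
    rw [hδ'] at hstep
    calc F (a + (n + 1 : ℕ) * δ) * (1 + c * δ) ^ (n + 1)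
        = F (a + (n + 1 : ℕ) * δ) * (1 + c * δ) * (1 + c * δ) ^ n := by ring
      _ ≤ F (a + n * δ) * (1 + c * δ) ^ n := by gcongr
      _ ≤ F a := mul_one_add_pow_le_of_mul_one_add_le hF hc hδ n

lemma mul_exp_le_of_mul_one_add_le
    (hF : ∀ s t, a ≤ s → s ≤ t → F t * (1 + c * (t - s)) ≤ F s) (hc : 0 ≤ c)
    {t : ℝ} (ht : a ≤ t) : F t * exp (c * (t - a)) ≤ F a := by
  refine le_of_tendsto ((tendsto_one_add_div_pow_exp (c * (t - a))).const_mul (F t)) ?_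
  filter_upwards [eventually_ne_atTop 0] with n hn
  have hn' : (n : ℝ) ≠ 0 := Nat.cast_ne_zero.mpr hn
  have h := mul_one_add_pow_le_of_mul_one_add_le hF hc
    (div_nonneg (sub_nonneg.mpr ht) n.cast_nonneg) n
  rwa [mul_div_cancel₀ _ hn', add_sub_cancel, mul_div_assoc'] at h

end DiscreteGronwall

lemma sub_mul_add_setIntegral_Ioi_le_setIntegral_Ioi {E : ℝ → ℝ} {s t : ℝ} (hst : s ≤ t)
    (hE : AntitoneOn E (Icc s t)) (hint : IntegrableOn E (Ioi s)) :
    (t - s) * E t + ∫ u in Ioi t, E u ≤ ∫ u in Ioi s, E u := by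
  have hunion := Ioc_union_Ioi_eq_Ioi hst
  rw [← hunion] at hint ⊢
  rw [setIntegral_union (Ioc_disjoint_Ioi le_rfl) measurableSet_Ioi
    (hint.mono_set subset_union_left) (hint.mono_set subset_union_right)]
  gcongr
  calc (t - s) * E t = ∫ _ in Ioc s t, E t := by
        rw [setIntegral_const, volume_real_Ioc_of_le hst, smul_eq_mul]
    _ ≤ ∫ u in Ioc s t, E u :=
      setIntegral_mono_on (integrableOn_const (by simp)) (hint.mono_set subset_union_left)
        measurableSet_Ioc fun u hu =>
          hE ⟨hu.1.le, hu.2⟩ ⟨hst, le_rfl⟩ hu.2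

theorem komornik_thm_8_1_all_t (E : ℝ → ℝ)
    (hE_nonneg : ∀ t ≥ 0, 0 ≤ E t)
    (hE_mono : ∀ s t : ℝ, 0 ≤ s → s ≤ t → E t ≤ E s)
    (hE_int : ∀ t ≥ 0, MeasureTheory.IntegrableOn E (Set.Ioi t))
    (T : ℝ) (hT : 0 < T)
    (h : ∀ t ≥ 0, (∫ s in Set.Ioi t, E s) ≤ T * E t) :
    ∀ t ≥ 0, E t ≤ E 0 * Real.exp (1 - t / T) := by
  set F : ℝ → ℝ := fun t => ∫ s in Ioi t, E s
  have hF_step : ∀ s t, 0 ≤ s → s ≤ t → (t - s) * E t + F t ≤ F s := fun s t hs hst =>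
    sub_mul_add_setIntegral_Ioi_le_setIntegral_Ioi hst
      (fun x hx y _ hxy => hE_mono x y (hs.trans hx.1) hxy) (hE_int s hs)
  have hF_decay : ∀ s t, 0 ≤ s → s ≤ t → F t * (1 + T⁻¹ * (t - s)) ≤ F s := by
    intro s t hs hst
    have hFt : F t / T ≤ E t := (div_le_iff₀' hT).mpr (h t (hs.trans hst))
    calc F t * (1 + T⁻¹ * (t - s)) = (t - s) * (F t / T) + F t := by ring
      _ ≤ (t - s) * E t + F t := by gcongr
      _ ≤ F s := hF_step s t hs hst
  intro t ht
  rcases le_or_gt t T with htT | hTt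
  · have : 1 ≤ exp (1 - t / T) := one_le_exp (by rw [sub_nonneg, div_le_one hT]; exact htT)
    nlinarith [hE_mono 0 t le_rfl ht, hE_nonneg 0 le_rfl]
  · have hTt' : 0 ≤ t - T := by linarith
    have hFt : 0 ≤ F t :=
      setIntegral_nonneg measurableSet_Ioi fun u hu => hE_nonneg u (ht.trans hu.le)
    have hTE : T * E t ≤ F (t - T) := by linarith [hF_step (t - T) t hTt' (by linarith)]
    have hdecay := mul_exp_le_of_mul_one_add_le hF_decay (inv_nonneg.mpr hT.le) hTt'
    rw [sub_zero] at hdecay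
    set x := exp (T⁻¹ * (t - T))
    have hexp : exp (1 - t / T) * x = 1 := by
      rw [← exp_add]; field_simp; simp
    have hx : 0 < x := exp_pos _
    have hscaled : T * (E t * x) ≤ T * (E 0 * exp (1 - t / T) * x) := by
      calc T * (E t * x) ≤ F (t - T) * x := by rw [← mul_assoc]; gcongr
        _ ≤ F 0 := hdecay
        _ ≤ T * E 0 := h 0 le_rfl
        _ = T * (E 0 * exp (1 - t / T) * x) := by rw [mul_assoc (E 0), hexp, mul_one]
    exact le_of_mul_le_mul_right (le_of_mul_le_mul_left hscaled hT) hx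
end

section
/- Let E : [0,∞) → [0,∞) be non-increasing and suppose there exist constants α > 0 and T > 0 such that ∫_t^∞ E(s)^{α+1} ds ≤ T·E(0)^α·E(t) for all t ≥ 0. Then E(t) ≤ E(0)·((T + αT)/(T + αt))^{1/α} for all t ≥ T. -/
/-!
Put `F t = ∫_t^∞ E^(α+1)` and `c = T E(0)^α`. The hypothesis says `F ≤ c E`, hence
`F s - F u = ∫_s^u E^(α+1) ≥ c^-(α+1) ∫_s^u F^(α+1)`, so `F` decays at least as fast as the
solution of `ψ' = -c^-(α+1) ψ^(α+1)` with `ψ 0 = T E(0)^(α+1) ≥ F 0`, namely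
`ψ u = T E(0)^(α+1) (T / (T + α u))^(1/α)`; comparing at the last time where `F ≤ ψ` makes this
precise. Since `E` is non-increasing, `d E(t)^(α+1) ≤ F (t - d)`, and `d = (T + α t) / (1 + α)`
gives the bound.
-/

open Set MeasureTheory intervalIntegral Real

theorem le_of_intervalIntegral_comparison {φ F ψ : ℝ → ℝ} {a b : ℝ} (hab : a ≤ b)
    (hφ : MonotoneOn φ (Ici 0)) (hF : ContinuousOn F (Icc a b)) (hψ : ContinuousOn ψ (Icc a b))
    (hψ_nonneg : ∀ x ∈ Icc a b, 0 ≤ ψ x)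
    (hφF : IntervalIntegrable (fun x => φ (F x)) volume a b)
    (hφψ : IntervalIntegrable (fun x => φ (ψ x)) volume a b)
    (hF_decay : ∀ s ∈ Icc a b, ∫ x in s..b, φ (F x) ≤ F s - F b)
    (hψ_decay : ∀ s ∈ Icc a b, ψ s - ψ b ≤ ∫ x in s..b, φ (ψ x))
    (ha : F a ≤ ψ a) : F b ≤ ψ b := by
  set S := {x ∈ Icc a b | F x ≤ ψ x}
  have hS : IsCompact S :=
    isCompact_Icc.of_isClosed_subset (isClosed_Icc.isClosed_le hF hψ) (sep_subset _ _)
  obtain ⟨ht, hFψ⟩ : sSup S ∈ S := hS.sSup_mem ⟨a, left_mem_Icc.2 hab, ha⟩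
  set t := sSup S
  have hψ_le_F : ∀ x ∈ Ioo t b, φ (ψ x) ≤ φ (F x) := fun x hx => by
    have hxab : x ∈ Icc a b := ⟨ht.1.trans hx.1.le, hx.2.le⟩
    have hlt : ψ x < F x := lt_of_not_ge fun hle => hx.1.not_ge (le_csSup hS.bddAbove ⟨hxab, hle⟩)
    exact hφ (hψ_nonneg x hxab) (hψ_nonneg x hxab |>.trans hlt.le) hlt.le
  have hsub : uIcc t b ⊆ uIcc a b := uIcc_subset_uIcc (Icc_subset_uIcc ht) right_mem_uIcc
  calc F b ≤ F t - ∫ x in t..b, φ (F x) := by linarith [hF_decay t ht]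
    _ ≤ ψ t - ∫ x in t..b, φ (ψ x) :=
      sub_le_sub hFψ (integral_mono_on_of_le_Ioo ht.2 (hφψ.mono_set hsub) (hφF.mono_set hsub)
        hψ_le_F)
    _ ≤ ψ b := by linarith [hψ_decay t ht]

noncomputable def decayProfile (A τ α u : ℝ) : ℝ := A * (τ / (τ + α * u)) ^ (1 / α)

section DecayProfile

variable {A τ α : ℝ}

theorem decayProfile_zero (hτ : 0 < τ) : decayProfile A τ α 0 = A := by
  simp [decayProfile, hτ.ne']

theorem decayProfile_nonneg (hA : 0 ≤ A) (hτ : 0 ≤ τ) (hα : 0 ≤ α) {u : ℝ} (hu : 0 ≤ u) :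
    0 ≤ decayProfile A τ α u := by
  unfold decayProfile; positivity

theorem hasDerivAt_decayProfile (hA : 0 < A) (hτ : 0 < τ) (hα : 0 < α) {u : ℝ}
    (hu : 0 < τ + α * u) :
    HasDerivAt (decayProfile A τ α) (-(decayProfile A τ α u ^ (α + 1) / (τ * A ^ α))) u := by
  set r := τ / (τ + α * u)
  have hr : 0 < r := div_pos hτ hu
  have hbase : HasDerivAt (fun x => τ / (τ + α * x)) (-(α * r ^ 2 / τ)) u := by
    have hlin : HasDerivAt (fun x => τ + α * x) α u := by
      simpa using ((hasDerivAt_id u).const_mul α).const_add τ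
    refine ((hasDerivAt_const u τ).div hlin hu.ne').congr_deriv ?_
    simp only [r]; field_simp; ring
  refine ((hbase.rpow_const (p := 1 / α) (Or.inl hr.ne')).const_mul A).congr_deriv ?_
  show A * (-(α * r ^ 2 / τ) * (1 / α) * r ^ (1 / α - 1)) =
    -((A * r ^ (1 / α)) ^ (α + 1) / (τ * A ^ α))
  have hr_pow : r ^ (1 / α - 1) * r ^ 2 = r ^ (1 / α) * r := by
    rw [← rpow_natCast, ← rpow_add hr, ← rpow_add_one hr.ne']
    ring_nf
  rw [mul_rpow hA.le (rpow_nonneg hr.le _), ← rpow_mul hr.le,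
    show 1 / α * (α + 1) = 1 / α + 1 by field_simp; ring, rpow_add_one hA.ne', rpow_add_one hr.ne',
    ← hr_pow]
  field_simp

theorem continuousOn_decayProfile (hA : 0 < A) (hτ : 0 < τ) (hα : 0 < α) :
    ContinuousOn (decayProfile A τ α) (Ici 0) := fun x (hx : 0 ≤ x) =>
  (hasDerivAt_decayProfile hA hτ hα (by positivity)).continuousAt.continuousWithinAt

theorem decayProfile_sub_eq_integral (hA : 0 < A) (hτ : 0 < τ) (hα : 0 < α) {s u : ℝ}
    (hs : 0 ≤ s) (hsu : s ≤ u) :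
    decayProfile A τ α s - decayProfile A τ α u =
      ∫ x in s..u, decayProfile A τ α x ^ (α + 1) / (τ * A ^ α) := by
  have hsub : uIcc s u ⊆ Ici 0 := fun x hx => hs.trans (uIcc_of_le hsu ▸ hx).1
  have hderiv : ∀ x ∈ uIcc s u, HasDerivAt (decayProfile A τ α)
      (-(decayProfile A τ α x ^ (α + 1) / (τ * A ^ α))) x := fun x hx =>
    hasDerivAt_decayProfile hA hτ hα (by have : 0 ≤ x := hsub hx; positivity)
  have hcont : ContinuousOn (fun x => decayProfile A τ α x ^ (α + 1) / (τ * A ^ α)) (uIcc s u) :=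
    (((continuousOn_decayProfile hA hτ hα).mono hsub).rpow_const
      fun _ _ => Or.inr (by positivity)).div_const _
  have := integral_eq_sub_of_hasDerivAt hderiv hcont.neg.intervalIntegrable
  rw [intervalIntegral.integral_neg] at this
  linarith

end DecayProfile

theorem le_decayProfile_of_integral_rpow_le {F : ℝ → ℝ} {A τ α : ℝ} (hA : 0 < A) (hτ : 0 < τ)
    (hα : 0 < α) (hF : ContinuousOn F (Ici 0))
    (hF_decay : ∀ s u, 0 ≤ s → s ≤ u → ∫ x in s..u, F x ^ (α + 1) ≤ τ * A ^ α * (F s - F u))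
    (hF0 : F 0 ≤ A) {u : ℝ} (hu : 0 ≤ u) : F u ≤ decayProfile A τ α u := by
  have hc : 0 < τ * A ^ α := by positivity
  have hsub : Icc 0 u ⊆ Ici 0 := Icc_subset_Ici_self
  have hψ := (continuousOn_decayProfile hA hτ hα).mono hsub
  refine le_of_intervalIntegral_comparison (φ := fun y => y ^ (α + 1) / (τ * A ^ α)) hu
    ?_ (hF.mono hsub) hψ (fun x hx => decayProfile_nonneg hA.le hτ.le hα.le hx.1) ?_ ?_ ?_ ?_
    (by rwa [decayProfile_zero hτ])
  · exact fun x hx y hy hxy =>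
      div_le_div_of_nonneg_right (rpow_le_rpow hx hxy (by positivity)) hc.le
  · exact (((hF.mono hsub).rpow_const fun _ _ => Or.inr (by positivity)).div_const
      _).intervalIntegrable_of_Icc hu
  · exact ((hψ.rpow_const fun _ _ => Or.inr (by positivity)).div_const
      _).intervalIntegrable_of_Icc hu
  · intro s hs
    rw [intervalIntegral.integral_div, div_le_iff₀ hc, mul_comm]
    exact hF_decay s u hs.1 hs.2
  · exact fun s hs => (decayProfile_sub_eq_integral hA hτ hα hs.1 hs.2).le

theorem mul_le_integral_Ioi_of_antitoneOn {g : ℝ → ℝ} {s t : ℝ} (hst : s ≤ t)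
    (hg : AntitoneOn g (Icc s t)) (hg_nonneg : ∀ x ∈ Ioi t, 0 ≤ g x)
    (hg_int : IntegrableOn g (Ioi s)) : (t - s) * g t ≤ ∫ x in Ioi s, g x := by
  have hint : IntervalIntegrable g volume s t :=
    (intervalIntegrable_iff_integrableOn_Ioc_of_le hst).2 (hg_int.mono_set Ioc_subset_Ioi_self)
  rw [← integral_interval_add_Ioi' hint (hg_int.mono_set (Ioi_subset_Ioi hst))]
  have hhead : (t - s) * g t ≤ ∫ x in s..t, g x := by
    rw [← smul_eq_mul, ← intervalIntegral.integral_const]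
    exact integral_mono_on hst intervalIntegrable_const hint
      fun x hx => hg hx (right_mem_Icc.2 hst) hx.2
  linarith [setIntegral_nonneg (μ := volume) measurableSet_Ioi hg_nonneg]

theorem integral_rpow_tail_le_mul_sub {E : ℝ → ℝ} {p c a s u : ℝ} (hp : 0 ≤ p) (hc : 0 ≤ c)
    (hE_nonneg : ∀ x ≥ a, 0 ≤ E x) (hE_int : IntegrableOn (fun x => E x ^ p) (Ioi a))
    (hE_tail : ∀ x ≥ a, ∫ y in Ioi x, E y ^ p ≤ c * E x) (hs : a ≤ s) (hsu : s ≤ u) :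
    ∫ x in s..u, (∫ y in Ioi x, E y ^ p) ^ p ≤
      c ^ p * ((∫ y in Ioi s, E y ^ p) - ∫ y in Ioi u, E y ^ p) := by
  have hsub : Icc s u ⊆ Ici a := fun x hx => hs.trans hx.1
  rw [integral_Ioi_sub_Ioi (hE_int.mono_set (Ioi_subset_Ioi hs)) hsu,
    ← intervalIntegral.integral_const_mul]
  refine integral_mono_on hsu ?_ ?_ fun x hx => ?_
  · exact ((hE_int.continuousOn_Ici_primitive_Ioi.mono hsub).rpow_const
      fun _ _ => Or.inr hp).intervalIntegrable_of_Icc hsu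
  · exact ((intervalIntegrable_iff_integrableOn_Ioc_of_le hsu).2
      (hE_int.mono_set fun y hy => lt_of_le_of_lt hs hy.1)).const_mul _
  · have hx : a ≤ x := hsub hx
    have htail_nonneg : 0 ≤ ∫ y in Ioi x, E y ^ p := setIntegral_nonneg measurableSet_Ioi
      fun y hy => rpow_nonneg (hE_nonneg y (hx.trans (le_of_lt hy))) _
    rw [← mul_rpow hc (hE_nonneg x hx)]
    exact rpow_le_rpow htail_nonneg (hE_tail x hx) hp

theorem integral_Ioi_rpow_le_decayProfile {E : ℝ → ℝ} {α T : ℝ} (hα : 0 < α) (hT : 0 < T)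
    (hE_nonneg : ∀ t ≥ 0, 0 ≤ E t) (hE0 : 0 < E 0)
    (hE_int : IntegrableOn (fun s => E s ^ (α + 1)) (Ioi 0))
    (h : ∀ t ≥ 0, ∫ s in Ioi t, E s ^ (α + 1) ≤ T * E 0 ^ α * E t) {u : ℝ} (hu : 0 ≤ u) :
    ∫ s in Ioi u, E s ^ (α + 1) ≤ decayProfile (T * E 0 ^ (α + 1)) T α u := by
  have hc : (T * E 0 ^ α) ^ (α + 1) = T * (T * E 0 ^ (α + 1)) ^ α := by
    rw [mul_rpow hT.le (by positivity), mul_rpow hT.le (by positivity), ← rpow_mul hE0.le,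
      ← rpow_mul hE0.le, rpow_add_one hT.ne', mul_comm α]
    ring
  refine le_decayProfile_of_integral_rpow_le (by positivity) hT hα
    hE_int.continuousOn_Ici_primitive_Ioi (fun s u hs hsu => ?_) ?_ hu
  · rw [← hc]
    exact integral_rpow_tail_le_mul_sub (by positivity) (by positivity) hE_nonneg hE_int h hs hsu
  · simpa only [rpow_add_one hE0.ne', ← mul_assoc] using h 0 le_rfl

theorem le_mul_rpow_of_rpow_le {x y q α : ℝ} (hα : 0 < α) (hx : 0 ≤ x) (hy : 0 ≤ y) (hq : 0 < q)
    (h : x ^ (α + 1) ≤ q * y ^ (α + 1) * q ^ (1 / α)) : x ≤ y * q ^ (1 / α) := by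
  rw [← rpow_le_rpow_iff hx (by positivity) (by linarith : 0 < α + 1), mul_rpow hy (by positivity),
    ← rpow_mul hq.le, show 1 / α * (α + 1) = 1 / α + 1 by field_simp; ring, rpow_add_one hq.ne']
  linarith

theorem komornik_thm_9_1 (E : ℝ → ℝ)
    (hE_nonneg : ∀ t ≥ 0, 0 ≤ E t)
    (hE_mono : ∀ s t : ℝ, 0 ≤ s → s ≤ t → E t ≤ E s)
    (α T : ℝ) (hα : 0 < α) (hT : 0 < T)
    (hE_int : ∀ t ≥ 0, MeasureTheory.IntegrableOn (fun s => (E s) ^ (α + 1)) (Set.Ioi t))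
    (h : ∀ t ≥ 0, (∫ s in Set.Ioi t, (E s) ^ (α + 1)) ≤ T * (E 0) ^ α * E t) :
    ∀ t ≥ T, E t ≤ E 0 * ((T + α * T) / (T + α * t)) ^ (1 / α) := by
  intro t ht
  rcases (hE_nonneg 0 le_rfl).eq_or_lt with hE0 | hE0
  · rw [← hE0, zero_mul]
    exact hE0 ▸ hE_mono 0 t le_rfl (hT.le.trans ht)
  have ht0 : 0 < t := hT.trans_le ht
  set d := (T + α * t) / (1 + α)
  have hd : 0 < d := div_pos (by positivity) (by positivity)
  have hs : 0 ≤ t - d := by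
    rw [sub_nonneg, div_le_iff₀ (by positivity)]
    nlinarith
  have hTs : T + α * (t - d) = d := by simp only [d]; field_simp; ring
  have hE_pow_anti : AntitoneOn (fun x => E x ^ (α + 1)) (Ici 0) := fun x hx y hy hxy =>
    rpow_le_rpow (hE_nonneg y hy) (hE_mono x y hx hxy) (by positivity)
  have hlow := mul_le_integral_Ioi_of_antitoneOn (sub_le_self t hd.le)
    (hE_pow_anti.mono fun x hx => hs.trans hx.1)
    (fun x hx => rpow_nonneg (hE_nonneg x (ht0.le.trans hx.out.le)) _) (hE_int _ hs)
  have hupp := integral_Ioi_rpow_le_decayProfile hα hT hE_nonneg hE0 (hE_int 0 le_rfl) h hs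
  have hkey : d * E t ^ (α + 1) ≤ T * E 0 ^ (α + 1) * (T / d) ^ (1 / α) := by
    simpa only [sub_sub_cancel, decayProfile, hTs] using hlow.trans hupp
  rw [show (T + α * T) / (T + α * t) = T / d by simp only [d]; field_simp]
  refine le_mul_rpow_of_rpow_le hα (hE_nonneg t ht0.le) hE0.le (div_pos hT hd) ?_
  rw [mul_comm, ← le_div_iff₀ hd] at hkey
  exact hkey.trans_eq (by ring)
end

section
/- Let E : [0,∞) → [0,∞) be non-increasing with ∫_t^∞ E(s) ds ≤ T·E(t) for all t ≥ 0, where T > 0. Then the function G(t) = ∫_t^∞ E(s) ds satisfies G(t) ≤ G(0)·e^{-t/T} for all t ≥ 0. -/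
/-!
Write `G t = ∫_t^∞ E`. Since `E` is non-increasing, `G s - G (s + k) = ∫_s^{s+k} E ≥ k E (s + k)`,
and `T E (s + k) ≥ G (s + k)` turns this into `G (s + k) (1 + k / T) ≤ G s`, a discrete form of
`G' ≤ -G / T`. Iterating it `n` times with step `t / n` gives `G t (1 + t / (n T))ⁿ ≤ G 0`, and
letting `n → ∞` gives `G t e^{t / T} ≤ G 0`.
-/

open MeasureTheory Set Filter Topology Real

section DiscreteGronwall

variable {G : ℝ → ℝ} {c : ℝ}

theorem mul_one_add_mul_pow_le_of_step (hc : 0 ≤ c)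
    (hstep : ∀ s k, 0 ≤ s → 0 ≤ k → G (s + k) * (1 + c * k) ≤ G s) {k : ℝ} (hk : 0 ≤ k) :
    ∀ n : ℕ, G (n * k) * (1 + c * k) ^ n ≤ G 0
  | 0 => by simp
  | n + 1 =>
    calc G ((n + 1 : ℕ) * k) * (1 + c * k) ^ (n + 1)
        = G (n * k + k) * (1 + c * k) * (1 + c * k) ^ n := by push_cast; ring_nf
      _ ≤ G (n * k) * (1 + c * k) ^ n := by
        gcongr
        exact hstep _ _ (by positivity) hk
      _ ≤ G 0 := mul_one_add_mul_pow_le_of_step hc hstep hk n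

theorem le_mul_exp_neg_of_step (hc : 0 ≤ c)
    (hstep : ∀ s k, 0 ≤ s → 0 ≤ k → G (s + k) * (1 + c * k) ≤ G s) {t : ℝ} (ht : 0 ≤ t) :
    G t ≤ G 0 * exp (-(c * t)) := by
  have hpow : ∀ n : ℕ, 0 < n → G t * (1 + c * t / n) ^ n ≤ G 0 := fun n hn => by
    have := mul_one_add_mul_pow_le_of_step hc hstep (div_nonneg ht n.cast_nonneg) n
    rwa [mul_div_cancel₀ t (by positivity), ← mul_div_assoc] at this
  have hlim : Tendsto (fun n : ℕ => G t * (1 + c * t / n) ^ n) atTop (𝓝 (G t * exp (c * t))) :=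
    (tendsto_one_add_div_pow_exp (c * t)).const_mul (G t)
  have hexp : G t * exp (c * t) ≤ G 0 :=
    le_of_tendsto hlim ((eventually_gt_atTop 0).mono hpow)
  rw [exp_neg, ← div_eq_mul_inv, le_div_iff₀ (exp_pos _)]
  exact hexp

end DiscreteGronwall

theorem sub_mul_add_setIntegral_Ioi_le_of_antitoneOn {E : ℝ → ℝ} {s u : ℝ} (hsu : s ≤ u)
    (hE : AntitoneOn E (Icc s u)) (hint : IntegrableOn E (Ioi s)) :
    (u - s) * E u + ∫ x in Ioi u, E x ≤ ∫ x in Ioi s, E x := by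
  rw [← intervalIntegral.integral_interval_add_Ioi hint (hint.mono_set (Ioi_subset_Ioi hsu))]
  gcongr
  calc (u - s) * E u = ∫ _ in s..u, E u := by simp
    _ ≤ ∫ x in s..u, E x :=
      intervalIntegral.integral_mono_on hsu intervalIntegrable_const
        ((intervalIntegrable_iff_integrableOn_Ioc_of_le hsu).2
          (hint.mono_set Ioc_subset_Ioi_self))
        fun x hx => hE hx (right_mem_Icc.2 hsu) hx.2

theorem tail_integral_exponential_decay_general (E : ℝ → ℝ)
    (hE_mono : ∀ s t : ℝ, 0 ≤ s → s ≤ t → E t ≤ E s)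
    (hE_int : MeasureTheory.IntegrableOn E (Set.Ici 0))
    (T : ℝ) (hT : 0 < T)
    (h : ∀ t ≥ (0 : ℝ), (∫ s in Set.Ioi t, E s) ≤ T * E t) :
    ∀ t ≥ (0 : ℝ),
      (∫ s in Set.Ioi t, E s) ≤ (∫ s in Set.Ioi (0:ℝ), E s) * Real.exp (-t / T) := by
  intro t ht
  have hstep : ∀ s k, 0 ≤ s → 0 ≤ k →
      (∫ x in Ioi (s + k), E x) * (1 + T⁻¹ * k) ≤ ∫ x in Ioi s, E x := by
    intro s k hs hk
    have htail : (∫ x in Ioi (s + k), E x) ≤ T * E (s + k) := h _ (by positivity)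
    have hsplit := sub_mul_add_setIntegral_Ioi_le_of_antitoneOn (le_add_of_nonneg_right hk)
      (fun x hx y _ hxy => hE_mono x y (hs.trans hx.1) hxy)
      (hE_int.mono_set fun x hx => hs.trans (le_of_lt hx))
    calc (∫ x in Ioi (s + k), E x) * (1 + T⁻¹ * k)
        = k * (T⁻¹ * ∫ x in Ioi (s + k), E x) + ∫ x in Ioi (s + k), E x := by ring
      _ ≤ (s + k - s) * E (s + k) + ∫ x in Ioi (s + k), E x := by
        rw [add_sub_cancel_left]
        gcongr
        rwa [inv_mul_le_iff₀ hT]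
      _ ≤ ∫ x in Ioi s, E x := hsplit
  simpa [neg_div, div_eq_inv_mul] using le_mul_exp_neg_of_step (G := fun τ => ∫ x in Ioi τ, E x)
    (inv_nonneg.2 hT.le) hstep ht

theorem tail_integral_exponential_decay (E : ℝ → ℝ)
    (hE_nonneg : ∀ t ≥ (0 : ℝ), 0 ≤ E t)
    (hE_mono : ∀ s t : ℝ, 0 ≤ s → s ≤ t → E t ≤ E s)
    (hE_int : MeasureTheory.IntegrableOn E (Set.Ici 0))
    (T : ℝ) (hT : 0 < T)
    (h : ∀ t ≥ (0 : ℝ), (∫ s in Set.Ioi t, E s) ≤ T * E t) :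
    ∀ t ≥ (0 : ℝ),
      (∫ s in Set.Ioi t, E s) ≤ (∫ s in Set.Ioi (0:ℝ), E s) * Real.exp (-t / T) :=
  tail_integral_exponential_decay_general E hE_mono hE_int T hT h
end
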